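/- Fix q ∈ ℂ with q ≠ 0 and q not a root of unity, an integer n ≥ 1, and set c(n) = −1/(qⁿ + q⁻ⁿ)². Let (e₋₁, e₁, A) be a Podleś representation with parameter c(n) on an n-dimensional complex vector space V with A invertible. Then the representation is irreducible: the only subspaces of V invariant under all of e₋₁, e₁ and A are 0 and V. -/
import Mathlib


/-- A Podleś representation with parameter `c` on a complex vector space. -/
def PodlesRep (q c : ℂ) {V : Type*} [AddCommGroup V] [Module ℂ V]
    (em e1 A : Module.End ℂ V) : Prop :=
  em * e1 = A - A ^ 2 + c • (1 : Module.End ℂ V) ∧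
  e1 * em = q ^ 2 • A - q ^ 4 • A ^ 2 + c • (1 : Module.End ℂ V) ∧
  e1 * A = q ^ 2 • (A * e1) ∧
  em * A = (q ^ 2)⁻¹ • (A * em)

private lemma pow_inj_aux {r : ℂ} (hr : r ≠ 0) (h : ∀ k : ℕ, 0 < k → r ^ k ≠ 1) :
    Function.Injective fun k : ℕ => r ^ k := by
  intro i j hij
  simp only at hij
  by_contra hne
  wlog hlt : i < j generalizing i j
  · exact this hij.symm (Ne.symm hne) (by omega)
  have h2 : r ^ i * r ^ (j - i) = r ^ i * 1 := by
    rw [mul_one, ← pow_add, show i + (j - i) = j by omega, ← hij]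
  exact h (j - i) (by omega) (mul_left_cancel₀ (pow_ne_zero i hr) h2)

/-- A chain of eigenvectors with eigenvalue multiplied by a non-root-of-unity at each step
must terminate in a finite-dimensional space. -/
private lemma chain_term {V : Type*} [AddCommGroup V] [Module ℂ V] [FiniteDimensional ℂ V]
    (A T : Module.End ℂ V) {r : ℂ}
    (hr : Function.Injective fun k : ℕ => r ^ k)
    (hcomm : ∀ (lam : ℂ) (v : V), A v = lam • v → A (T v) = (r * lam) • T v)
    (v₀ : V) {lam₀ : ℂ} (hl : lam₀ ≠ 0) (hv : A v₀ = lam₀ • v₀) :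
    ∃ k, (T ^ k) v₀ = 0 := by
  have heig : ∀ k : ℕ, A ((T ^ k) v₀) = (r ^ k * lam₀) • (T ^ k) v₀ := by
    intro k
    induction k with
    | zero => simpa using hv
    | succ k ih =>
      have h2 := hcomm _ _ ih
      rw [pow_succ', Module.End.mul_apply, h2]
      congr 1
      ring
  by_contra h
  push_neg at h
  have hli : LinearIndependent ℂ (fun i : Fin (Module.finrank ℂ V + 1) => (T ^ (i : ℕ)) v₀) := by
    apply Module.End.eigenvectors_linearIndependent' A
      (fun i : Fin (Module.finrank ℂ V + 1) => r ^ (i : ℕ) * lam₀)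
    · intro i j hij
      exact Fin.ext (hr (mul_right_cancel₀ hl hij))
    · intro i
      exact ⟨Module.End.mem_eigenspace_iff.mpr (heig i), h i⟩
  have hcard := hli.fintype_card_le_finrank
  simp at hcard

/-- An `n`-dimensional Podleś representation with parameter `c(n) = −1/(qⁿ+q⁻ⁿ)²` with
invertible `A` is irreducible: the only subspaces invariant under `e₋₁, e₁` and `A`
are `0` and the whole space. -/
theorem stmt8 {V : Type*} [AddCommGroup V] [Module ℂ V] [FiniteDimensional ℂ V]
    (q : ℂ) (hq : q ≠ 0) (hq' : ∀ k : ℕ, 0 < k → q ^ k ≠ 1)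
    (n : ℕ) (hn : 1 ≤ n) (hdim : Module.finrank ℂ V = n)
    (em e1 A : Module.End ℂ V)
    (hrep : PodlesRep q (-1 / (q ^ (n : ℤ) + q ^ (-(n : ℤ))) ^ 2) em e1 A)
    (hA : Function.Bijective ⇑A) :
    ∀ W : Submodule ℂ V,
      (∀ x ∈ W, em x ∈ W) → (∀ x ∈ W, e1 x ∈ W) → (∀ x ∈ W, A x ∈ W) →
      W = ⊥ ∨ W = ⊤ := by
  classical
  unfold PodlesRep at hrep
  obtain ⟨h1, h2, h3, h4⟩ := hrep
  intro W hWm hW1 hWA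
  by_cases hWbot : W = ⊥
  · exact Or.inl hWbot
  right
  have hq2 : (q : ℂ) ^ 2 ≠ 0 := pow_ne_zero 2 hq
  have hqinj : Function.Injective fun k : ℕ => q ^ k := pow_inj_aux hq hq'
  have hq2inj : Function.Injective fun k : ℕ => (q ^ 2) ^ k := by
    apply pow_inj_aux hq2
    intro k hk
    rw [← pow_mul]
    exact hq' (2 * k) (by omega)
  have hq2iinj : Function.Injective fun k : ℕ => ((q ^ 2)⁻¹) ^ k := by
    apply pow_inj_aux (inv_ne_zero hq2)
    intro k hk h0
    rw [inv_pow, inv_eq_one, ← pow_mul] at h0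
    exact hq' (2 * k) (by omega) h0
  set t : ℂ := q ^ n with ht
  have htz : t ≠ 0 := pow_ne_zero n hq
  set s : ℂ := q ^ (n : ℤ) + q ^ (-(n : ℤ)) with hs
  have hsval : s = t + t⁻¹ := by rw [hs, zpow_neg, zpow_natCast]
  have hsz : s ≠ 0 := by
    intro h0
    rw [hsval] at h0
    have h1' : t ^ 2 = -1 := by field_simp at h0; linear_combination h0
    have h2' : q ^ (4 * n) = 1 := by
      have h5 : (t ^ 2) ^ 2 = 1 := by rw [h1']; ring
      have h6 : t ^ 4 = 1 := by rw [← h5]; ring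
      rw [ht, ← pow_mul] at h6
      rw [show 4 * n = n * 4 by ring]
      exact h6
    exact hq' (4 * n) (by omega) h2'
  set c : ℂ := -1 / s ^ 2 with hc
  have hcval : c * s ^ 2 = -1 := by rw [hc]; field_simp
  have hts : t * t⁻¹ = 1 := mul_inv_cancel₀ htz
  -- pointwise commutation relations on eigenvectors
  have comm1 : ∀ (lam : ℂ) (v : V), A v = lam • v → A (e1 v) = ((q ^ 2)⁻¹ * lam) • e1 v := by
    intro lam v hv
    have h3' := congrFun (congrArg (⇑) h3) v
    simp only [Module.End.mul_apply, LinearMap.smul_apply] at h3'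
    rw [hv, map_smul] at h3'
    have := congrArg (fun x => (q ^ 2)⁻¹ • x) h3'
    simp only [smul_smul, inv_mul_cancel₀ hq2, one_smul] at this
    rw [← this]
  have comm2 : ∀ (lam : ℂ) (v : V), A v = lam • v → A (em v) = (q ^ 2 * lam) • em v := by
    intro lam v hv
    have h4' := congrFun (congrArg (⇑) h4) v
    simp only [Module.End.mul_apply, LinearMap.smul_apply] at h4'
    rw [hv, map_smul] at h4'
    have := congrArg (fun x => (q ^ 2) • x) h4'
    simp only [smul_smul, mul_inv_cancel₀ hq2, one_smul] at this
    rw [← this]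
  -- pointwise defining relations on eigenvectors
  have rel1 : ∀ (lam : ℂ) (v : V), A v = lam • v →
      em (e1 v) = (lam - lam ^ 2 + c) • v := by
    intro lam v hv
    have h1' := congrFun (congrArg (⇑) h1) v
    simp only [LinearMap.add_apply, LinearMap.sub_apply, Module.End.mul_apply,
      LinearMap.smul_apply, Module.End.one_apply, pow_two] at h1'
    rw [hv, map_smul, hv] at h1'
    rw [h1']
    module
  have rel2 : ∀ (lam : ℂ) (v : V), A v = lam • v →
      e1 (em v) = (q ^ 2 * lam - q ^ 4 * lam ^ 2 + c) • v := by
    intro lam v hv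
    have h2' := congrFun (congrArg (⇑) h2) v
    simp only [LinearMap.add_apply, LinearMap.sub_apply, Module.End.mul_apply,
      LinearMap.smul_apply, Module.End.one_apply, pow_two] at h2'
    rw [hv, map_smul, hv] at h2'
    rw [h2']
    module
  -- an eigenvector of A inside W
  haveI : Nontrivial W := Submodule.nontrivial_iff_ne_bot.mpr hWbot
  obtain ⟨μ₀, hμ₀⟩ := Module.End.exists_eigenvalue (A.restrict hWA)
  obtain ⟨w, hw⟩ := hμ₀.exists_hasEigenvector
  have hw1 : A (w : V) = μ₀ • (w : V) := by
    have hh := Module.End.mem_eigenspace_iff.mp hw.1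
    calc A (w : V) = ((A.restrict hWA) w : V) := (LinearMap.restrict_coe_apply _ _ _).symm
      _ = ((μ₀ • w : W) : V) := by rw [hh]
      _ = μ₀ • (w : V) := rfl
  have hwne : (w : V) ≠ 0 := fun h0 => hw.2 (Subtype.ext h0)
  have hμ₀ne : μ₀ ≠ 0 := by
    intro h0
    apply hwne
    apply hA.injective
    rw [hw1, h0, zero_smul, map_zero]
  -- the upward chain terminates
  obtain ⟨kf, hkf⟩ := chain_term A em hq2inj comm2 (w : V) hμ₀ne hw1
  have hmemU : ∀ k : ℕ, ((em ^ k) (w : V)) ∈ W := by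
    intro k
    induction k with
    | zero => simp only [pow_zero, Module.End.one_apply]; exact w.2
    | succ k ih =>
      rw [pow_succ', Module.End.mul_apply]
      exact hWm _ ih
  have heigU : ∀ k : ℕ, A ((em ^ k) (w : V)) = ((q ^ 2) ^ k * μ₀) • (em ^ k) (w : V) := by
    intro k
    induction k with
    | zero => simpa using hw1
    | succ k ih =>
      have h2 := comm2 _ _ ih
      rw [pow_succ' em, Module.End.mul_apply, h2]
      congr 1
      ring
  have hex : ∃ k, (em ^ k) (w : V) = 0 := ⟨kf, hkf⟩
  set k₀ := Nat.find hex with hk₀def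
  have hk₀ : (em ^ k₀) (w : V) = 0 := Nat.find_spec hex
  have hk₀pos : 0 < k₀ := by
    rcases Nat.eq_zero_or_pos k₀ with h0 | h0
    · rw [h0] at hk₀
      simp only [pow_zero, Module.End.one_apply] at hk₀
      exact absurd hk₀ hwne
    · exact h0
  set u : V := (em ^ (k₀ - 1)) (w : V) with hu
  have hu0 : u ≠ 0 := Nat.find_min hex (by omega)
  have huW : u ∈ W := hmemU _
  set μ : ℂ := (q ^ 2) ^ (k₀ - 1) * μ₀ with hμ
  have huA : A u = μ • u := heigU _
  have hμne : μ ≠ 0 := mul_ne_zero (pow_ne_zero _ hq2) hμ₀ne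
  have hemu : em u = 0 := by
    have : (em ^ ((k₀ - 1) + 1)) (w : V) = 0 := by
      rw [show (k₀ - 1) + 1 = k₀ by omega]; exact hk₀
    rw [pow_succ', Module.End.mul_apply] at this
    exact this
  -- the eigenvalue μ satisfies the quadratic equation
  have hquad : q ^ 2 * μ - q ^ 4 * μ ^ 2 + c = 0 := by
    have hr := rel2 μ u huA
    rw [hemu, map_zero] at hr
    exact ((smul_eq_zero.mp hr.symm).resolve_right hu0)
  have hfact : (q ^ 2 * s * μ - t) * (q ^ 2 * s * μ - t⁻¹) = 0 := by
    rw [hsval] at hcval ⊢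
    linear_combination (-(t + t⁻¹) ^ 2) * hquad + hcval + hts
  -- downward chain data
  have hmemD : ∀ k : ℕ, ((e1 ^ k) u) ∈ W := by
    intro k
    induction k with
    | zero => simpa using huW
    | succ k ih =>
      rw [pow_succ', Module.End.mul_apply]
      exact hW1 _ ih
  have heigD : ∀ k : ℕ, A ((e1 ^ k) u) = (((q ^ 2)⁻¹) ^ k * μ) • (e1 ^ k) u := by
    intro k
    induction k with
    | zero => simpa using huA
    | succ k ih =>
      have h2 := comm1 _ _ ih
      rw [pow_succ' e1, Module.End.mul_apply, h2]
      congr 1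
      ring
  -- key scalar: e1-step is injective on the chain while f(λ_k) ≠ 0
  have hstep : ∀ k : ℕ,
      (((q ^ 2)⁻¹) ^ k * μ) - (((q ^ 2)⁻¹) ^ k * μ) ^ 2 + c ≠ 0 →
      (e1 ^ k) u ≠ 0 → (e1 ^ (k + 1)) u ≠ 0 := by
    intro k hfk hk h0
    apply hfk
    have hr := rel1 _ _ (heigD k)
    rw [pow_succ', Module.End.mul_apply] at h0
    rw [h0, map_zero] at hr
    exact ((smul_eq_zero.mp hr.symm).resolve_right hk)
  -- factorization of f(λ)
  have hffact : ∀ lam : ℂ, (s * lam - t) * (s * lam - t⁻¹) ≠ 0 → lam - lam ^ 2 + c ≠ 0 := by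
    intro lam hne h0
    apply hne
    rw [hsval] at hcval ⊢
    linear_combination (-(t + t⁻¹) ^ 2) * h0 + hcval + hts
  -- key cancellation: (q^2)^k * ((q^2)⁻¹^k * μ) = μ
  have hcanc : ∀ k : ℕ, (q ^ 2) ^ k * (((q ^ 2)⁻¹) ^ k * μ) = μ := by
    intro k
    rw [← mul_assoc, ← mul_pow, mul_inv_cancel₀ hq2, one_pow, one_mul]
  rcases mul_eq_zero.mp hfact with hcase | hcase
  · -- case μ = q^(n-2)/s : get n independent eigenvectors in W
    have hcA : q ^ 2 * s * μ = t := by linear_combination hcase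
    have hfk : ∀ k : ℕ, k + 1 < n →
        (((q ^ 2)⁻¹) ^ k * μ) - (((q ^ 2)⁻¹) ^ k * μ) ^ 2 + c ≠ 0 := by
      intro k hkn
      apply hffact
      intro h0
      rcases mul_eq_zero.mp h0 with h0 | h0
      · -- s * λ_k = t ⇒ q^(2k+2) = 1
        have h0' : s * (((q ^ 2)⁻¹) ^ k * μ) = t := by linear_combination h0
        have h1' : q ^ 2 * (q ^ 2) ^ k * (s * (((q ^ 2)⁻¹) ^ k * μ)) = q ^ 2 * (q ^ 2) ^ k * t := by
          rw [h0']
        have h2' : t = q ^ (2 * (k + 1)) * t := by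
          rw [pow_mul]
          calc t = q ^ 2 * s * μ := hcA.symm
            _ = q ^ 2 * (q ^ 2) ^ k * (s * (((q ^ 2)⁻¹) ^ k * μ)) := by
                rw [mul_comm s, mul_assoc (((q ^ 2)⁻¹) ^ k) μ s]
                rw [show (((q ^ 2)⁻¹) ^ k * (μ * s)) = (((q ^ 2)⁻¹) ^ k * μ) * s by ring]
                rw [show q ^ 2 * (q ^ 2) ^ k * ((((q ^ 2)⁻¹) ^ k * μ) * s)
                    = q ^ 2 * ((q ^ 2) ^ k * (((q ^ 2)⁻¹) ^ k * μ)) * s by ring, hcanc]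
                ring
            _ = q ^ 2 * (q ^ 2) ^ k * t := h1'
            _ = (q ^ 2) ^ (k + 1) * t := by ring
        have h5 := h2'
        nth_rewrite 1 [← one_mul t] at h5
        exact hq' (2 * (k + 1)) (by omega) (mul_right_cancel₀ htz h5).symm
      · -- s * λ_k = t⁻¹ ⇒ q^(2n) = q^(2k+2) ⇒ k = n-1, contradiction
        have h0' : s * (((q ^ 2)⁻¹) ^ k * μ) = t⁻¹ := by linear_combination h0
        have h1' : q ^ 2 * (q ^ 2) ^ k * (s * (((q ^ 2)⁻¹) ^ k * μ)) = q ^ 2 * (q ^ 2) ^ k * t⁻¹ := by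
          rw [h0']
        have h2' : t = q ^ (2 * (k + 1)) * t⁻¹ := by
          rw [pow_mul]
          calc t = q ^ 2 * s * μ := hcA.symm
            _ = q ^ 2 * (q ^ 2) ^ k * (s * (((q ^ 2)⁻¹) ^ k * μ)) := by
                rw [show q ^ 2 * (q ^ 2) ^ k * (s * (((q ^ 2)⁻¹) ^ k * μ))
                    = q ^ 2 * ((q ^ 2) ^ k * (((q ^ 2)⁻¹) ^ k * μ)) * s by ring, hcanc]
                ring
            _ = q ^ 2 * (q ^ 2) ^ k * t⁻¹ := h1'
            _ = (q ^ 2) ^ (k + 1) * t⁻¹ := by ring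
        have h4 := congrArg (fun x => x * t) h2'
        simp only [mul_assoc, inv_mul_cancel₀ htz, mul_one] at h4
        rw [ht, ← pow_add] at h4
        have h3' : q ^ (2 * n) = q ^ (2 * (k + 1)) := by
          rw [show 2 * n = n + n by omega]; exact h4
        have := hqinj h3'
        omega
    have hne : ∀ k : ℕ, k < n → (e1 ^ k) u ≠ 0 := by
      intro k
      induction k with
      | zero => intro _; simpa using hu0
      | succ k ih =>
        intro hk1
        exact hstep k (hfk k hk1) (ih (by omega))
    -- the n eigenvectors in W
    have heigW : ∀ i : Fin n, (A.restrict hWA) ⟨(e1 ^ (i : ℕ)) u, hmemD i⟩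
        = (((q ^ 2)⁻¹) ^ (i : ℕ) * μ) • ⟨(e1 ^ (i : ℕ)) u, hmemD i⟩ := by
      intro i
      apply Subtype.ext
      rw [LinearMap.restrict_coe_apply]
      exact heigD i
    have hli : LinearIndependent ℂ
        (fun i : Fin n => (⟨(e1 ^ (i : ℕ)) u, hmemD i⟩ : W)) := by
      apply Module.End.eigenvectors_linearIndependent' (A.restrict hWA)
        (fun i : Fin n => ((q ^ 2)⁻¹) ^ (i : ℕ) * μ)
      · intro i j hij
        exact Fin.ext (hq2iinj (mul_right_cancel₀ hμne hij))
      · intro i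
        refine ⟨Module.End.mem_eigenspace_iff.mpr (heigW i), ?_⟩
        intro h0
        exact hne i i.2 (by simpa using congrArg Subtype.val h0)
    have hcard := hli.fintype_card_le_finrank
    simp only [Fintype.card_fin] at hcard
    have hle : Module.finrank ℂ W ≤ n := hdim ▸ Submodule.finrank_le W
    exact Submodule.eq_top_of_finrank_eq (by rw [hdim]; omega)
  · -- case μ = q^(-n-2)/s : the downward chain never terminates, contradiction
    exfalso
    have hcB : q ^ 2 * s * μ = t⁻¹ := by linear_combination hcase
    have hfk : ∀ k : ℕ,
        (((q ^ 2)⁻¹) ^ k * μ) - (((q ^ 2)⁻¹) ^ k * μ) ^ 2 + c ≠ 0 := by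
      intro k
      apply hffact
      intro h0
      rcases mul_eq_zero.mp h0 with h0 | h0
      · -- s * λ_k = t ⇒ t⁻¹ = q^(2k+2) * t ⇒ q^(2n+2k+2) = 1
        have h0' : s * (((q ^ 2)⁻¹) ^ k * μ) = t := by linear_combination h0
        have h2' : t⁻¹ = (q ^ 2) ^ (k + 1) * t := by
          calc t⁻¹ = q ^ 2 * s * μ := hcB.symm
            _ = q ^ 2 * ((q ^ 2) ^ k * (((q ^ 2)⁻¹) ^ k * μ)) * s := by rw [hcanc]; ring
            _ = q ^ 2 * (q ^ 2) ^ k * (s * (((q ^ 2)⁻¹) ^ k * μ)) := by ring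
            _ = (q ^ 2) ^ (k + 1) * t := by rw [h0']; ring
        have h3' : q ^ (2 * n + 2 * (k + 1)) = 1 := by
          have h4 := congrArg (fun x => t * x) h2'
          simp only [mul_inv_cancel₀ htz] at h4
          rw [ht, ← pow_mul q 2 (k + 1)] at h4
          rw [show 2 * n + 2 * (k + 1) = n + (2 * (k + 1) + n) by omega, pow_add, pow_add]
          exact h4.symm
        exact hq' _ (by omega) h3'
      · -- s * λ_k = t⁻¹ ⇒ q^(2k+2) = 1
        have h0' : s * (((q ^ 2)⁻¹) ^ k * μ) = t⁻¹ := by linear_combination h0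
        have h2' : t⁻¹ = (q ^ 2) ^ (k + 1) * t⁻¹ := by
          calc t⁻¹ = q ^ 2 * s * μ := hcB.symm
            _ = q ^ 2 * ((q ^ 2) ^ k * (((q ^ 2)⁻¹) ^ k * μ)) * s := by rw [hcanc]; ring
            _ = q ^ 2 * (q ^ 2) ^ k * (s * (((q ^ 2)⁻¹) ^ k * μ)) := by ring
            _ = (q ^ 2) ^ (k + 1) * t⁻¹ := by rw [h0']; ring
        have h3' : q ^ (2 * (k + 1)) = 1 := by
          have h4 := congrArg (fun x => x * t) h2'
          simp only [mul_assoc, inv_mul_cancel₀ htz, mul_one] at h4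
          rw [pow_mul]
          exact h4.symm
        exact hq' (2 * (k + 1)) (by omega) h3'
    have hall : ∀ k : ℕ, (e1 ^ k) u ≠ 0 := by
      intro k
      induction k with
      | zero => simpa using hu0
      | succ k ih => exact hstep k (hfk k) ih
    obtain ⟨k, hk⟩ := chain_term A e1 hq2iinj comm1 u hμne huA
    exact hall k hk
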